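/- (Theorem 3.2, explicit form for e = 1.) Assume in addition the BKL relation: ∑_{n=0}^{1−c} (−1)^{n+c} B_i^{(n)} B_{τi} B_i^{(1−c−n)} = (q_i − q_i^{-1})^{-1} ( q_i^{c} (q_i^{-2}; q_i^{-2})_{−c} B_i^{(−c)} k̃_i − (q_i^{2}; q_i^{2})_{−c} B_i^{(−c)} k̃_{τi} ), where (a; x)_n = ∏_{k=0}^{n−1} (1 − a x^k). Then for every integer m > 1−c: ∑_{r+s=m, r,s≥0} (−1)^{r+c} q_i^{r(1−c−m)} B_i^{(r)} B_{τi} B_i^{(s)} = (−1)^{1−c} [m−1]! (q_i − q_i^{-1})^{m−2} q_i^{(1−m)(m−2+2c)/2} B_i^{(m−1)} k̃_{τi}. -/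

import Mathlib

noncomputable section

/-- The quantum integer `[n]_v = (v^n - v^{-n})/(v - v^{-1})`. -/
def qint {K : Type*} [Field K] (v : RatFunc K) (n : ℤ) : RatFunc K :=
  (v ^ n - v ^ (-n)) / (v - v⁻¹)

/-- The quantum factorial `[m]_v! = [1]_v [2]_v ⋯ [m]_v`. -/
def qfact {K : Type*} [Field K] (v : RatFunc K) (m : ℕ) : RatFunc K :=
  ∏ k ∈ Finset.range m, qint v ((k : ℤ) + 1)

/-- The q-Pochhammer symbol `(a; x)_n = ∏_{k=0}^{n-1} (1 - a x^k)`. -/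
def qpoch {K : Type*} [Field K] (a x : RatFunc K) (n : ℕ) : RatFunc K :=
  ∏ k ∈ Finset.range n, (1 - a * x ^ k)

/-- The divided power `x^{(m)} = x^m/[m]_v!` for `m ≥ 0`, and `0` for `m < 0`. -/
def dp {K : Type*} [Field K] {A : Type*} [Ring A] [Algebra (RatFunc K) A]
    (v : RatFunc K) (x : A) (m : ℤ) : A :=
  if m < 0 then 0 else (qfact v m.toNat)⁻¹ • x ^ m.toNat

/-- `P_{m,e} = ∏_{j=0}^{c+m−2} (−q_i^{e(2j−c−2m+2)} + q_i^{c−2})`,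
an empty product (occurring when `c+m−2 < 0`) being `1`. -/
def Pprod {K : Type*} [Field K] (v : RatFunc K) (c : ℤ) (m : ℕ) (e : ℤ) : RatFunc K :=
  ∏ j ∈ Finset.range (c + (m : ℤ) - 1).toNat,
    (-(v ^ (e * (2 * (j : ℤ) - c - 2 * (m : ℤ) + 2))) + v ^ (c - 2))

/-- `Q_{m,e} = ∏_{j=0}^{c+m−2} (−q_i^{e(2j−c−2m+2)} + q_i^{2−c})`. -/
def Qprod {K : Type*} [Field K] (v : RatFunc K) (c : ℤ) (m : ℕ) (e : ℤ) : RatFunc K :=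
  ∏ j ∈ Finset.range (c + (m : ℤ) - 1).toNat,
    (-(v ^ (e * (2 * (j : ℤ) - c - 2 * (m : ℤ) + 2))) + v ^ (2 - c))

/-- The element `ỹ_{m,e} = ∑_{r+s=m} (−1)^{r+c} q_i^{er(1−c−m)} B_i^{(r)} B_{τi} B_i^{(s)}
− ([1−c]!/[m]) (q_i−q_i^{-1})^{−c−1} ( P_{m,e} q_i^{(−c²+3c)/2} B_i^{(m−1)} k̃_i
  − (−1)^c Q_{m,e} q_i^{(c²−c)/2} B_i^{(m−1)} k̃_{τi} )`. -/
def ytil {K : Type*} [Field K] {A : Type*} [Ring A] [Algebra (RatFunc K) A]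
    (v : RatFunc K) (Bi Bt ki kt : A) (c : ℤ) (m : ℕ) (e : ℤ) : A :=
  (∑ r ∈ Finset.range (m + 1),
      ((-1 : RatFunc K) ^ ((r : ℤ) + c) * v ^ (e * (r : ℤ) * (1 - c - (m : ℤ)))) •
        (dp v Bi (r : ℤ) * Bt * dp v Bi ((m : ℤ) - (r : ℤ))))
    - (qfact v (1 - c).toNat / qint v (m : ℤ) * (v - v⁻¹) ^ (-c - 1)) •
      ((Pprod v c m e * v ^ ((-c ^ 2 + 3 * c) / 2)) • (dp v Bi ((m : ℤ) - 1) * ki)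
        - ((-1 : RatFunc K) ^ c * Qprod v c m e * v ^ ((c ^ 2 - c) / 2)) •
            (dp v Bi ((m : ℤ) - 1) * kt))

/-- The order-reversed element `ỹ'_{m,e}`. -/
def ytil' {K : Type*} [Field K] {A : Type*} [Ring A] [Algebra (RatFunc K) A]
    (v : RatFunc K) (Bi Bt ki kt : A) (c : ℤ) (m : ℕ) (e : ℤ) : A :=
  (∑ r ∈ Finset.range (m + 1),
      ((-1 : RatFunc K) ^ ((r : ℤ) + c) * v ^ (e * (r : ℤ) * (1 - c - (m : ℤ)))) •
        (dp v Bi ((m : ℤ) - (r : ℤ)) * Bt * dp v Bi (r : ℤ)))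
    - (qfact v (1 - c).toNat / qint v (m : ℤ) * (v - v⁻¹) ^ (-c - 1)) •
      ((Pprod v c m e * v ^ ((-c ^ 2 + 3 * c) / 2)) • (kt * dp v Bi ((m : ℤ) - 1))
        - ((-1 : RatFunc K) ^ c * Qprod v c m e * v ^ ((c ^ 2 - c) / 2)) •
            (ki * dp v Bi ((m : ℤ) - 1)))

/-- The BKL relation
`∑_{n=0}^{1−c} (−1)^{n+c} B_i^{(n)} B_{τi} B_i^{(1−c−n)}
 = (q_i−q_i^{-1})^{-1} ( q_i^c (q_i^{-2};q_i^{-2})_{−c} B_i^{(−c)} k̃_i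
   − (q_i^2;q_i^2)_{−c} B_i^{(−c)} k̃_{τi} )`. -/
def BKL {K : Type*} [Field K] {A : Type*} [Ring A] [Algebra (RatFunc K) A]
    (v : RatFunc K) (Bi Bt ki kt : A) (c : ℤ) : Prop :=
  ∑ n ∈ Finset.range ((1 - c).toNat + 1),
      ((-1 : RatFunc K) ^ ((n : ℤ) + c)) • (dp v Bi (n : ℤ) * Bt * dp v Bi (1 - c - (n : ℤ)))
    = (v - v⁻¹)⁻¹ •
        ((v ^ c * qpoch (v ^ (-2 : ℤ)) (v ^ (-2 : ℤ)) (-c).toNat) • (dp v Bi (-c) * ki)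
          - qpoch (v ^ (2 : ℤ)) (v ^ (2 : ℤ)) (-c).toNat • (dp v Bi (-c) * kt))
/-!
Write `y_m` for the sum on the left. Multiplying by `B_i` on either side and using
`B_i^{(n)} B_i = [n+1] B_i^{(n+1)}` gives the recursion
`q^{c+2m} [m+1] y_{m+1} = q^{c+2m} y_m B_i - B_i y_m`, which is where the weight
`q^{r(1-c-m)}` comes from. On a term `B_i^{(n)} k` with `k B_i = w B_i k` the right-hand side
acts as multiplication by `[n+1] (q^{c+2m} w - 1)`. The BKL relation is the value of `y_{1-c}`;
in the first step the factor for `k̃_i` is `q^{2-c} q^{c-2} - 1 = 0`, so only the `k̃_{τi}`-term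
survives, and from then on induction on `m` keeps `y_m` a multiple of `B_i^{(m-1)} k̃_{τi}`.
Since `q^ε` is not a root of unity, all the quantum integers `[n]`, `n ≠ 0`, are invertible.
-/

open Finset

theorem RatFunc.X_pow_eq_one_iff {K : Type*} [Field K] {n : ℕ} :
    (RatFunc.X : RatFunc K) ^ n = 1 ↔ n = 0 := by
  refine ⟨fun h => ?_, fun h => by rw [h, pow_zero]⟩
  rw [← RatFunc.algebraMap_X, ← map_pow, ← map_one (algebraMap (Polynomial K) (RatFunc K))] at h
  simpa using congrArg Polynomial.natDegree (RatFunc.algebraMap_injective K h)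

theorem RatFunc.not_isOfFinOrder_X_pow {K : Type*} [Field K] {ε : ℕ} (hε : 0 < ε) :
    ¬IsOfFinOrder ((RatFunc.X : RatFunc K) ^ ε) := by
  rw [isOfFinOrder_iff_pow_eq_one]
  rintro ⟨n, hn, h⟩
  rw [← pow_mul, RatFunc.X_pow_eq_one_iff] at h
  exact (Nat.mul_pos hε hn).ne' h

theorem zpow_ne_one_of_not_isOfFinOrder {G : Type*} [DivisionMonoid G] {x : G}
    (hx : ¬IsOfFinOrder x) {n : ℤ} (hn : n ≠ 0) : x ^ n ≠ 1 :=
  fun h => hx (isOfFinOrder_iff_zpow_eq_one.mpr ⟨n, hn, h⟩)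

theorem sub_inv_ne_zero {F : Type*} [DivisionRing F] {x : F} (hx0 : x ≠ 0)
    (hx : ¬IsOfFinOrder x) : x - x⁻¹ ≠ 0 := by
  intro h
  apply zpow_ne_one_of_not_isOfFinOrder hx two_ne_zero
  rw [zpow_two]
  nth_rewrite 2 [sub_eq_zero.mp h]
  exact mul_inv_cancel₀ hx0

section QNumbers

variable {K : Type*} [Field K] {v : RatFunc K}

variable (v) in
theorem qint_zero : qint v 0 = 0 := by simp [qint]

theorem qint_mul_sub_inv (hv0 : v ≠ 0) (hv : ¬IsOfFinOrder v) (n : ℤ) :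
    qint v n * (v - v⁻¹) = v ^ n - v ^ (-n) :=
  div_mul_cancel₀ _ (sub_inv_ne_zero hv0 hv)

theorem qint_ne_zero (hv0 : v ≠ 0) (hv : ¬IsOfFinOrder v) {n : ℤ} (hn : n ≠ 0) :
    qint v n ≠ 0 := by
  refine div_ne_zero (fun h => zpow_ne_one_of_not_isOfFinOrder hv (mul_ne_zero two_ne_zero hn) ?_)
    (sub_inv_ne_zero hv0 hv)
  rw [two_mul, zpow_add₀ hv0]
  nth_rewrite 2 [sub_eq_zero.mp h]
  rw [← zpow_add₀ hv0, add_neg_cancel, zpow_zero]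

variable (v) in
theorem qfact_succ (m : ℕ) : qfact v (m + 1) = qfact v m * qint v ((m : ℤ) + 1) :=
  prod_range_succ _ _

theorem qpoch_zpow_two (hv0 : v ≠ 0) (hv : ¬IsOfFinOrder v) (n : ℕ) :
    qpoch (v ^ (2 : ℤ)) (v ^ (2 : ℤ)) n
      = (-1) ^ n * v ^ ((n : ℤ) * (n + 1) / 2) * (v - v⁻¹) ^ n * qfact v n := by
  induction n with
  | zero => simp [qpoch, qfact]
  | succ n ih =>
    have hexp : ((n + 1 : ℕ) : ℤ) * ((n + 1 : ℕ) + 1) / 2 = (n : ℤ) * (n + 1) / 2 + (n + 1) := by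
      push_cast
      rw [← Int.add_mul_ediv_right _ _ two_ne_zero]
      ring_nf
    have hfactor : 1 - v ^ (2 : ℤ) * (v ^ (2 : ℤ)) ^ n
        = -(v ^ ((n : ℤ) + 1) * (qint v ((n : ℤ) + 1) * (v - v⁻¹))) := by
      rw [qint_mul_sub_inv hv0 hv, mul_sub, ← zpow_natCast, ← zpow_mul, ← zpow_add₀ hv0,
        ← zpow_add₀ hv0, ← zpow_add₀ hv0, add_neg_cancel, zpow_zero]
      ring_nf
    rw [qpoch, prod_range_succ, ← qpoch, ih, hfactor, hexp, zpow_add₀ hv0 _ ((n : ℤ) + 1),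
      qfact_succ]
    ring

end QNumbers

section DividedPowers

variable {K : Type*} [Field K] {v : RatFunc K} {A : Type*} [Ring A] [Algebra (RatFunc K) A]

theorem self_mul_dp (x : A) (n : ℤ) : x * dp v x n = dp v x n * x := by
  unfold dp
  split_ifs
  · rw [mul_zero, zero_mul]
  · rw [mul_smul_comm, smul_mul_assoc, ← pow_succ', ← pow_succ]

theorem dp_mul_self (hv0 : v ≠ 0) (hv : ¬IsOfFinOrder v) (x : A) (n : ℤ) :
    dp v x n * x = qint v (n + 1) • dp v x (n + 1) := by
  rcases lt_or_ge n 0 with hn | hn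
  · have hrhs : qint v (n + 1) • dp v x (n + 1) = 0 := by
      rcases (show n + 1 = 0 ∨ n + 1 < 0 by omega) with h | h
      · rw [h, qint_zero, zero_smul]
      · rw [dp, if_pos h, smul_zero]
    rw [hrhs, dp, if_pos hn, zero_mul]
  · lift n to ℕ using hn
    have hcast : (n : ℤ) + 1 = ((n + 1 : ℕ) : ℤ) := by push_cast; ring
    rw [dp, dp, if_neg (by omega), if_neg (by omega), hcast, Int.toNat_natCast,
      Int.toNat_natCast, smul_mul_assoc, ← pow_succ, smul_smul, qfact_succ, ← hcast]
    congr 1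
    have hq := qint_ne_zero hv0 hv (n := (n : ℤ) + 1) (by omega)
    field_simp

theorem smul_dp_mul_mul_sub (hv0 : v ≠ 0) (hv : ¬IsOfFinOrder v) {x k : A} {w : RatFunc K}
    (hk : k * x = w • (x * k)) (s : RatFunc K) (n : ℤ) :
    s • (dp v x n * k * x) - x * (dp v x n * k)
      = (qint v (n + 1) * (s * w - 1)) • (dp v x (n + 1) * k) := by
  rw [mul_assoc, hk, mul_smul_comm, ← mul_assoc, dp_mul_self hv0 hv, ← mul_assoc, self_mul_dp,
    dp_mul_self hv0 hv]
  simp only [smul_mul_assoc, smul_smul]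
  rw [← sub_smul]
  congr 1
  ring

end DividedPowers

section SerreSum

variable {K : Type*} [Field K] {v : RatFunc K} {A : Type*} [Ring A] [Algebra (RatFunc K) A]

variable (v) in
def serreSum (Bi Bt : A) (c : ℤ) (m : ℕ) : A :=
  ∑ r ∈ range (m + 1),
    ((-1 : RatFunc K) ^ ((r : ℤ) + c) * v ^ ((r : ℤ) * (1 - c - (m : ℤ)))) •
      (dp v Bi (r : ℤ) * Bt * dp v Bi ((m : ℤ) - (r : ℤ)))

theorem serreSum_mul_self (hv0 : v ≠ 0) (hv : ¬IsOfFinOrder v) (Bi Bt : A) (c : ℤ) (m : ℕ) :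
    serreSum v Bi Bt c m * Bi
      = ∑ r ∈ range (m + 2),
          ((-1 : RatFunc K) ^ ((r : ℤ) + c) * v ^ ((r : ℤ) * (1 - c - m)) * qint v (m + 1 - r)) •
            (dp v Bi r * Bt * dp v Bi (m + 1 - r)) := by
  rw [sum_range_succ, Nat.cast_succ, sub_self, qint_zero, mul_zero, zero_smul, add_zero,
    serreSum, sum_mul]
  refine sum_congr rfl fun r _ => ?_
  rw [smul_mul_assoc, mul_assoc, dp_mul_self hv0 hv, mul_smul_comm, smul_smul, sub_add_eq_add_sub]

theorem self_mul_serreSum (hv0 : v ≠ 0) (hv : ¬IsOfFinOrder v) (Bi Bt : A) (c : ℤ) (m : ℕ) :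
    Bi * serreSum v Bi Bt c m
      = ∑ r ∈ range (m + 2),
          ((-1 : RatFunc K) ^ ((r : ℤ) - 1 + c) * v ^ (((r : ℤ) - 1) * (1 - c - m)) * qint v r) •
            (dp v Bi r * Bt * dp v Bi (m + 1 - r)) := by
  rw [sum_range_succ', Nat.cast_zero, qint_zero, mul_zero, zero_smul, add_zero,
    serreSum, mul_sum]
  refine sum_congr rfl fun r _ => ?_
  rw [Nat.cast_succ, add_sub_cancel_right, add_sub_add_right_eq_sub, mul_smul_comm,
    ← mul_assoc, ← mul_assoc, self_mul_dp, dp_mul_self hv0 hv, smul_mul_assoc, smul_mul_assoc,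
    smul_smul]

theorem serreSum_coeff_succ (hv0 : v ≠ 0) (c m r : ℤ) :
    v ^ (c + 2 * m) * qint v (m + 1) * ((-1) ^ (r + c) * v ^ (r * (1 - c - (m + 1))))
      = v ^ (c + 2 * m) * ((-1) ^ (r + c) * v ^ (r * (1 - c - m)) * qint v (m + 1 - r))
        - (-1) ^ (r - 1 + c) * v ^ ((r - 1) * (1 - c - m)) * qint v r := by
  have hsign : (-1 : RatFunc K) ^ (r - 1 + c) = -(-1) ^ (r + c) := by
    rw [show r + c = r - 1 + c + 1 by ring, zpow_add_one₀ (by norm_num)]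
    ring
  have hpow : v ^ (c + 2 * m) * v ^ (r * (1 - c - (m + 1))) * (v ^ (m + 1) - v ^ (-(m + 1)))
      = v ^ (c + 2 * m) * v ^ (r * (1 - c - m)) * (v ^ (m + 1 - r) - v ^ (-(m + 1 - r)))
        + v ^ ((r - 1) * (1 - c - m)) * (v ^ r - v ^ (-r)) := by
    simp only [mul_sub, ← zpow_add₀ hv0]
    ring_nf
  simp only [hsign, qint, div_eq_mul_inv]
  linear_combination (-1) ^ (r + c) * (v - v⁻¹)⁻¹ * hpow

theorem serreSum_succ (hv0 : v ≠ 0) (hv : ¬IsOfFinOrder v) (Bi Bt : A) (c : ℤ) (m : ℕ) :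
    (v ^ (c + 2 * (m : ℤ)) * qint v ((m : ℤ) + 1)) • serreSum v Bi Bt c (m + 1)
      = v ^ (c + 2 * (m : ℤ)) • (serreSum v Bi Bt c m * Bi) - Bi * serreSum v Bi Bt c m := by
  rw [serreSum_mul_self hv0 hv, self_mul_serreSum hv0 hv, smul_sum, ← sum_sub_distrib, serreSum,
    smul_sum]
  refine sum_congr rfl fun r _ => ?_
  rw [smul_smul, smul_smul, ← sub_smul, Nat.cast_succ, serreSum_coeff_succ hv0, add_sub_right_comm]

end SerreSum

section SerreCoeff

variable {K : Type*} [Field K] {v : RatFunc K}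

variable (v) in
def serreCoeff (c : ℤ) (m : ℕ) : RatFunc K :=
  (-1 : RatFunc K) ^ (1 - c) * qfact v (m - 1) * (v - v⁻¹) ^ ((m : ℤ) - 2) *
    v ^ ((1 - (m : ℤ)) * ((m : ℤ) - 2 + 2 * c) / 2)

theorem serreCoeff_succ (hv0 : v ≠ 0) (hv : ¬IsOfFinOrder v) (c : ℤ) {m : ℕ} (hm : 1 ≤ m) :
    serreCoeff v c (m + 1) = serreCoeff v c m * qint v m * (v - v⁻¹) * v ^ (1 - c - m) := by
  obtain ⟨k, rfl⟩ : ∃ k, m = k + 1 := ⟨m - 1, by omega⟩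
  have hexp : (1 - ((k + 1 + 1 : ℕ) : ℤ)) * ((k + 1 + 1 : ℕ) - 2 + 2 * c) / 2
      = (1 - ((k + 1 : ℕ) : ℤ)) * ((k + 1 : ℕ) - 2 + 2 * c) / 2 + (1 - c - (k + 1 : ℕ)) := by
    push_cast
    rw [← Int.add_mul_ediv_right _ _ two_ne_zero]
    ring_nf
  rw [serreCoeff, serreCoeff, hexp, zpow_add₀ hv0, Nat.add_sub_cancel, Nat.add_sub_cancel,
    qfact_succ, show ((k + 1 + 1 : ℕ) : ℤ) - 2 = ((k + 1 : ℕ) : ℤ) - 2 + 1 by push_cast; ring,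
    zpow_add_one₀ (sub_inv_ne_zero hv0 hv), Nat.cast_succ]
  ring

theorem serreCoeff_neg_succ (hv0 : v ≠ 0) (hv : ¬IsOfFinOrder v) (n : ℕ) :
    serreCoeff v (-n) (n + 1) = -(v - v⁻¹)⁻¹ * qpoch (v ^ (2 : ℤ)) (v ^ (2 : ℤ)) n := by
  have hexp : (1 - ((n + 1 : ℕ) : ℤ)) * ((n + 1 : ℕ) - 2 + 2 * -(n : ℤ)) / 2
      = (n : ℤ) * (n + 1) / 2 := by
    push_cast; ring_nf
  rw [serreCoeff, qpoch_zpow_two hv0 hv, hexp, Nat.add_sub_cancel,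
    show ((n + 1 : ℕ) : ℤ) - 2 = n + -1 by push_cast; ring,
    zpow_add₀ (sub_inv_ne_zero hv0 hv), zpow_neg_one, zpow_natCast,
    show (1 : ℤ) - -n = n + 1 by ring, zpow_add_one₀ (by norm_num), zpow_natCast]
  ring

end SerreCoeff

section ClosedForm

variable {K : Type*} [Field K] {v : RatFunc K} {A : Type*} [Ring A] [Algebra (RatFunc K) A]

-- `z` is a part of `y_m` that the recursion annihilates: the `k̃_i`-term of the BKL relation.
theorem serreSum_succ_of_eq (hv0 : v ≠ 0) (hv : ¬IsOfFinOrder v) {Bi Bt kt : A} {c : ℤ}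
    (hkt : kt * Bi = v ^ (2 - c) • (Bi * kt)) {m : ℕ} (hm : 1 ≤ m) (z : A)
    (hz : v ^ (c + 2 * (m : ℤ)) • (z * Bi) - Bi * z = 0)
    (h : serreSum v Bi Bt c m = z + serreCoeff v c m • (dp v Bi ((m : ℤ) - 1) * kt)) :
    serreSum v Bi Bt c (m + 1) = serreCoeff v c (m + 1) • (dp v Bi m * kt) := by
  set s := v ^ (c + 2 * (m : ℤ))
  have hs : s * qint v ((m : ℤ) + 1) ≠ 0 :=
    mul_ne_zero (zpow_ne_zero _ hv0) (qint_ne_zero hv0 hv (by omega))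
  have hcoeff : serreCoeff v c m * (qint v m * (s * v ^ (2 - c) - 1))
      = s * qint v ((m : ℤ) + 1) * serreCoeff v c (m + 1) := by
    have hq := qint_mul_sub_inv hv0 hv ((m : ℤ) + 1)
    have h1 : s * v ^ (1 - c - (m : ℤ)) * v ^ ((m : ℤ) + 1) = s * v ^ (2 - c) := by
      simp only [s, ← zpow_add₀ hv0]; ring_nf
    have h2 : s * v ^ (1 - c - (m : ℤ)) * v ^ (-((m : ℤ) + 1)) = 1 := by
      simp only [s, ← zpow_add₀ hv0]; ring_nf; exact zpow_zero v
    rw [serreCoeff_succ hv0 hv c hm]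
    linear_combination (serreCoeff v c m * qint v m) *
      (h2 - h1 - s * v ^ (1 - c - (m : ℤ)) * hq)
  have hrec := serreSum_succ hv0 hv Bi Bt c m
  rw [h, add_mul, mul_add, smul_add, add_sub_add_comm, hz, zero_add, smul_mul_assoc,
    mul_smul_comm, smul_comm s, ← smul_sub, smul_dp_mul_mul_sub hv0 hv hkt,
    sub_add_cancel, smul_smul, hcoeff] at hrec
  exact smul_right_injective A hs (hrec.trans (mul_smul _ _ _))

theorem serreSum_eq_of_bkl (hv0 : v ≠ 0) (hv : ¬IsOfFinOrder v) {Bi Bt ki kt : A} {n : ℕ}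
    (hbkl : BKL v Bi Bt ki kt (-n)) :
    serreSum v Bi Bt (-n) (n + 1)
      = ((v - v⁻¹)⁻¹ * (v ^ (-(n : ℤ)) * qpoch (v ^ (-2 : ℤ)) (v ^ (-2 : ℤ)) n)) •
          (dp v Bi n * ki)
        + serreCoeff v (-n) (n + 1) • (dp v Bi (((n + 1 : ℕ) : ℤ) - 1) * kt) := by
  rw [BKL, show (1 - -(n : ℤ)).toNat = n + 1 by omega, neg_neg, Int.toNat_natCast] at hbkl
  rw [serreCoeff_neg_succ hv0 hv, Nat.cast_succ, add_sub_cancel_right, serreSum, neg_mul, neg_smul,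
    ← sub_eq_add_neg, ← smul_smul (v - v⁻¹)⁻¹, ← smul_smul (v - v⁻¹)⁻¹, ← smul_sub, ← hbkl]
  refine sum_congr rfl fun r _ => ?_
  rw [Nat.cast_succ, show (1 : ℤ) - -n - (n + 1) = 0 by ring, mul_zero, zpow_zero, mul_one,
    show (n : ℤ) + 1 - r = 1 - -n - r by ring]

theorem serreSum_eq_serreCoeff_smul (hv0 : v ≠ 0) (hv : ¬IsOfFinOrder v) {Bi Bt ki kt : A}
    {n : ℕ} (hki : ki * Bi = v ^ (-(n : ℤ) - 2) • (Bi * ki))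
    (hkt : kt * Bi = v ^ (2 - -(n : ℤ)) • (Bi * kt)) (hbkl : BKL v Bi Bt ki kt (-n))
    {m : ℕ} (hm : n + 1 ≤ m) :
    serreSum v Bi Bt (-n) (m + 1) = serreCoeff v (-n) (m + 1) • (dp v Bi m * kt) := by
  induction m, hm using Nat.le_induction with
  | base =>
    refine serreSum_succ_of_eq hv0 hv hkt (by omega) _ ?_ (serreSum_eq_of_bkl hv0 hv hbkl)
    have hvanish : v ^ (-(n : ℤ) + 2 * ((n + 1 : ℕ) : ℤ)) * v ^ (-(n : ℤ) - 2) = 1 := by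
      rw [← zpow_add₀ hv0]
      push_cast
      ring_nf
      exact zpow_zero v
    rw [smul_mul_assoc, mul_smul_comm, smul_comm, ← smul_sub, smul_dp_mul_mul_sub hv0 hv hki,
      hvanish, sub_self, mul_zero, zero_smul, smul_zero]
  | succ m hm ih =>
    refine serreSum_succ_of_eq hv0 hv hkt (by omega) 0 (by simp) ?_
    rw [ih, zero_add, Nat.cast_succ, add_sub_cancel_right]

end ClosedForm

theorem stmt6_general {K : Type*} [Field K]
    {A : Type*} [Ring A] [Algebra (RatFunc K) A]
    (ε : ℕ) (hε : 0 < ε) (v : RatFunc K) (hv : v = RatFunc.X ^ ε)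
    (Bi Bt ki kt : A) (c : ℤ) (hc : c ≤ 0)
    (hki : ki * Bi = v ^ (c - 2) • (Bi * ki))
    (hkt : kt * Bi = v ^ (2 - c) • (Bi * kt))
    (hbkl : BKL v Bi Bt ki kt c)
    (m : ℕ) (hm : 1 - c < (m : ℤ)) :
    ∑ r ∈ Finset.range (m + 1),
        ((-1 : RatFunc K) ^ ((r : ℤ) + c) * v ^ ((r : ℤ) * (1 - c - (m : ℤ)))) •
          (dp v Bi (r : ℤ) * Bt * dp v Bi ((m : ℤ) - (r : ℤ)))
      = ((-1 : RatFunc K) ^ (1 - c) * qfact v (m - 1) * (v - v⁻¹) ^ ((m : ℤ) - 2) *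
          v ^ ((1 - (m : ℤ)) * ((m : ℤ) - 2 + 2 * c) / 2)) •
            (dp v Bi ((m : ℤ) - 1) * kt) := by
  have hv0 : v ≠ 0 := hv ▸ pow_ne_zero ε RatFunc.X_ne_zero
  have hvgen : ¬IsOfFinOrder v := hv ▸ RatFunc.not_isOfFinOrder_X_pow hε
  obtain ⟨n, rfl⟩ := Int.exists_eq_neg_ofNat hc
  obtain ⟨k, rfl⟩ : ∃ k, m = k + 1 := ⟨m - 1, by omega⟩
  have h := serreSum_eq_serreCoeff_smul hv0 hvgen hki hkt hbkl (m := k) (by omega)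
  rwa [Nat.cast_succ, add_sub_cancel_right]

/-- (Theorem 3.2, explicit form for e = 1.) Assuming the BKL relation, for m > 1−c:
∑_{r+s=m} (−1)^{r+c} q_i^{r(1−c−m)} B_i^{(r)} B_{τi} B_i^{(s)}
= (−1)^{1−c} [m−1]! (q_i−q_i^{-1})^{m−2} q_i^{(1−m)(m−2+2c)/2} B_i^{(m−1)} k̃_{τi}. -/
theorem stmt6 {K : Type*} [Field K] [CharZero K]
    {A : Type*} [Ring A] [Algebra (RatFunc K) A]
    (ε : ℕ) (hε : 0 < ε) (v : RatFunc K) (hv : v = RatFunc.X ^ ε)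
    (Bi Bt ki kt : A) (c : ℤ) (hc : c ≤ 0)
    (hki : ki * Bi = v ^ (c - 2) • (Bi * ki))
    (hkt : kt * Bi = v ^ (2 - c) • (Bi * kt))
    (hbkl : BKL v Bi Bt ki kt c)
    (m : ℕ) (hm : 1 - c < (m : ℤ)) :
    ∑ r ∈ Finset.range (m + 1),
        ((-1 : RatFunc K) ^ ((r : ℤ) + c) * v ^ ((r : ℤ) * (1 - c - (m : ℤ)))) •
          (dp v Bi (r : ℤ) * Bt * dp v Bi ((m : ℤ) - (r : ℤ)))
      = ((-1 : RatFunc K) ^ (1 - c) * qfact v (m - 1) * (v - v⁻¹) ^ ((m : ℤ) - 2) *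
          v ^ ((1 - (m : ℤ)) * ((m : ℤ) - 2 + 2 * c) / 2)) •
            (dp v Bi ((m : ℤ) - 1) * kt) :=
  stmt6_general ε hε v hv Bi Bt ki kt c hc hki hkt hbkl m hm
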